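/- arXiv:0912.0868 — 2 statements merged into one kernel-verified Lean document; each statement's English description precedes it below -/
import Mathlib

section
/- For every n × n real matrix A with nonnegative entries such that every row sum of A is at most 1 and every column sum of A is at most 1 (i.e., A is doubly substochastic), there exists an n × n doubly stochastic matrix B (nonnegative entries, all row sums and all column sums equal to 1) with A(i,j) ≤ B(i,j) for all indices i, j. -/
/-- Every doubly substochastic matrix is entrywise dominated by a doubly stochastic matrix. -/
theorem substochastic_le_stochastic (n : ℕ) (A : Matrix (Fin n) (Fin n) ℝ)
    (hA0 : ∀ i j, 0 ≤ A i j)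
    (hrow : ∀ i, ∑ j, A i j ≤ 1)
    (hcol : ∀ j, ∑ i, A i j ≤ 1) :
    ∃ B : Matrix (Fin n) (Fin n) ℝ,
      (∀ i j, 0 ≤ B i j) ∧
      (∀ i, ∑ j, B i j = 1) ∧
      (∀ j, ∑ i, B i j = 1) ∧
      ∀ i j, A i j ≤ B i j := by
  set r : Fin n → ℝ := fun i => 1 - ∑ j, A i j with hr
  set c : Fin n → ℝ := fun j => 1 - ∑ i, A i j with hc
  have hr0 : ∀ i, 0 ≤ r i := fun i => by simp [hr]; linarith [hrow i]
  have hc0 : ∀ j, 0 ≤ c j := fun j => by simp [hc]; linarith [hcol j]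
  set s : ℝ := ∑ i, r i with hs
  have hs' : s = ∑ j, c j := by
    simp only [hs, hr, hc, Finset.sum_sub_distrib]
    rw [Finset.sum_comm]
  have hs0 : 0 ≤ s := Finset.sum_nonneg fun i _ => hr0 i
  rcases eq_or_lt_of_le hs0 with hz | hpos
  · -- s = 0 : A is already doubly stochastic
    have hrz : ∀ i, r i = 0 := by
      intro i
      have := (Finset.sum_eq_zero_iff_of_nonneg (fun i _ => hr0 i)).1 hz.symm
      exact this i (Finset.mem_univ i)
    have hcz : ∀ j, c j = 0 := by
      intro j
      have := (Finset.sum_eq_zero_iff_of_nonneg (fun j _ => hc0 j)).1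
        (hz.trans hs').symm
      exact this j (Finset.mem_univ j)
    refine ⟨A, hA0, fun i => ?_, fun j => ?_, fun i j => le_refl _⟩
    · have := hrz i; simp [hr] at this; linarith
    · have := hcz j; simp [hc] at this; linarith
  · refine ⟨fun i j => A i j + r i * c j / s, fun i j => ?_, fun i => ?_, fun j => ?_,
      fun i j => ?_⟩
    · have : 0 ≤ r i * c j / s := div_nonneg (mul_nonneg (hr0 i) (hc0 j)) hs0
      linarith [hA0 i j]
    · rw [Finset.sum_add_distrib]
      have : ∑ j, r i * c j / s = r i * (∑ j, c j) / s := by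
        rw [Finset.mul_sum, Finset.sum_div]
      rw [this, ← hs', mul_div_assoc, div_self hpos.ne', mul_one]
      simp [hr]
    · rw [Finset.sum_add_distrib]
      have : ∑ i, r i * c j / s = (∑ i, r i) * c j / s := by
        rw [Finset.sum_mul, Finset.sum_div]
      rw [this, ← hs, mul_comm, mul_div_assoc, div_self hpos.ne', mul_one]
      simp [hc]
    · have : 0 ≤ r i * c j / s := div_nonneg (mul_nonneg (hr0 i) (hc0 j)) hs0
      linarith
end

section
/- For every n × n real matrix A with nonnegative entries such that every row sum of A is at most 1 and every column sum of A is at most 1, there exist finitely many permutations σ₁, …, σ_m of Fin n and nonnegative reals ω₁, …, ω_m with ω₁ + ⋯ + ω_m = 1 such that A(u,w) ≤ Σ_{i=1}^m ω_i · [σ_i(u) = w] for all u, w ∈ Fin n, where [σ_i(u) = w] is 1 if σ_i(u) = w and 0 otherwise. -/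
/-- Any doubly substochastic matrix is entrywise dominated by a doubly stochastic matrix. -/
lemma exists_doublyStochastic_ge (n : ℕ) (hn : 0 < n) (A : Matrix (Fin n) (Fin n) ℝ)
    (hA0 : ∀ i j, 0 ≤ A i j)
    (hrow : ∀ i, ∑ j, A i j ≤ 1)
    (hcol : ∀ j, ∑ i, A i j ≤ 1) :
    ∃ B ∈ doublyStochastic ℝ (Fin n), ∀ i j, A i j ≤ B i j := by
  set r : Fin n → ℝ := fun i => 1 - ∑ j, A i j with hr
  set c : Fin n → ℝ := fun j => 1 - ∑ i, A i j with hc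
  have hr0 : ∀ i, 0 ≤ r i := fun i => by simp [hr, hrow i]
  have hc0 : ∀ j, 0 ≤ c j := fun j => by simp [hc, hcol j]
  set s : ℝ := ∑ i, r i with hs
  have hs' : s = ∑ j, c j := by
    simp only [hs, hr, hc, Finset.sum_sub_distrib]
    rw [Finset.sum_comm]
  have hs0 : 0 ≤ s := Finset.sum_nonneg fun i _ => hr0 i
  rcases eq_or_lt_of_le hs0 with h0 | hpos
  · -- s = 0 : A is already doubly stochastic
    have hri : ∀ i, r i = 0 := by
      intro i
      exact (Finset.sum_eq_zero_iff_of_nonneg (fun i _ => hr0 i)).1 h0.symm i (Finset.mem_univ _)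
    have hcj : ∀ j, c j = 0 := by
      intro j
      refine (Finset.sum_eq_zero_iff_of_nonneg (fun j _ => hc0 j)).1 ?_ j (Finset.mem_univ _)
      rw [← hs']; exact h0.symm
    refine ⟨A, ?_, fun i j => le_refl _⟩
    rw [mem_doublyStochastic_iff_sum]
    refine ⟨hA0, fun i => ?_, fun j => ?_⟩
    · have := hri i; simp [hr] at this; linarith
    · have := hcj j; simp [hc] at this; linarith
  · refine ⟨fun i j => A i j + r i * c j / s, ?_, fun i j => ?_⟩
    · refine mem_doublyStochastic_iff_sum.2 ?_; beta_reduce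
      refine ⟨fun i j => add_nonneg (hA0 i j)
        (div_nonneg (mul_nonneg (hr0 i) (hc0 j)) hs0), fun i => ?_, fun j => ?_⟩
      · rw [Finset.sum_add_distrib]
        have : ∑ j, r i * c j / s = r i := by
          rw [← Finset.sum_div, ← Finset.mul_sum, ← hs', mul_div_assoc,
            div_self hpos.ne', mul_one]
        rw [this]; simp [hr]
      · rw [Finset.sum_add_distrib]
        have : ∑ i, r i * c j / s = c j := by
          simp_rw [mul_comm (r _) (c j)]
          rw [← Finset.sum_div, ← Finset.mul_sum, ← hs, mul_div_assoc,
            div_self hpos.ne', mul_one]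
        rw [this]; simp [hc]
    · have : 0 ≤ r i * c j / s := div_nonneg (mul_nonneg (hr0 i) (hc0 j)) hs0
      linarith

/-- Scheduling lemma: any doubly substochastic matrix is entrywise dominated by a convex
combination of permutation matrices. -/
theorem substochastic_le_convex_perm (n : ℕ) (A : Matrix (Fin n) (Fin n) ℝ)
    (hA0 : ∀ i j, 0 ≤ A i j)
    (hrow : ∀ i, ∑ j, A i j ≤ 1)
    (hcol : ∀ j, ∑ i, A i j ≤ 1) :
    ∃ (m : ℕ) (σ : Fin m → Equiv.Perm (Fin n)) (ω : Fin m → ℝ),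
      (∀ i, 0 ≤ ω i) ∧ (∑ i, ω i = 1) ∧
      ∀ u w, A u w ≤ ∑ i, ω i * (if σ i u = w then 1 else 0) := by
  rcases Nat.eq_zero_or_pos n with rfl | hn
  · exact ⟨1, fun _ => 1, fun _ => 1, fun _ => zero_le_one, by simp,
      fun u w => u.elim0⟩
  obtain ⟨B, hB, hAB⟩ := exists_doublyStochastic_ge n hn A hA0 hrow hcol
  obtain ⟨w, hw0, hw1, hwB⟩ := exists_eq_sum_perm_of_mem_doublyStochastic hB
  let e := Fintype.equivFin (Equiv.Perm (Fin n))
  refine ⟨Fintype.card (Equiv.Perm (Fin n)), fun k => e.symm k, fun k => w (e.symm k),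
    fun k => hw0 _, ?_, fun u v => ?_⟩
  · rw [Equiv.sum_comp e.symm w, hw1]
  · calc A u v ≤ B u v := hAB u v
      _ = ∑ k, w (e.symm k) * (if (e.symm k) u = v then 1 else 0) := by
          rw [← hwB]
          rw [← Equiv.sum_comp e.symm (fun σ => w σ • σ.permMatrix ℝ)]
          simp [Matrix.sum_apply, PEquiv.toMatrix_apply, Equiv.toPEquiv_apply, mul_ite,
            mul_one, mul_zero]
end
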